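/- Let E be a directed graph, A a C*-algebra, {S_e, P_v} a Cuntz-Krieger E-family in A, H ⊆ E⁰ a saturated hereditary subset, and B ⊆ H^fin_∞. For w ∈ H^fin_∞ set P_{w,H} := Σ_{e : s(e) = w, r(e) ∉ H} S_e S_e* (a finite sum). Let C*(S, P) denote the C*-subalgebra of A generated by {S_e : e ∈ E¹} ∪ {P_v : v ∈ E⁰}. Then the closed two-sided ideal J_{H,B} of C*(S, P) generated by {P_v : v ∈ H} ∪ {P_w − P_{w,H} : w ∈ B} equals the closed linear span of {S_α P_v S_β* : v ∈ H, α, β paths with r(α) = r(β) = v} ∪ {S_μ (P_w − P_{w,H}) S_ν* : w ∈ B, μ, ν paths with r(μ) = r(ν) = w}. -/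

import Mathlib

/-- A (countable) directed graph `E = (E⁰, E¹, r, s)`:
a set of vertices, a set of edges, and range and source maps. -/
structure Digraph' where
  V : Type
  E : Type
  src : E → V
  rng : E → V

namespace Digraph'

variable (G : Digraph')

/-- `v ≥ w`: there is a path (possibly of length zero) from `v` to `w`. -/
def Reach (v w : G.V) : Prop :=
  Relation.ReflTransGen (fun a b : G.V => ∃ e : G.E, G.src e = a ∧ G.rng e = b) v w

/-- A set `H` of vertices is hereditary if `v ∈ H` and `v ≥ w` imply `w ∈ H`. -/
def Hereditary (H : Set G.V) : Prop :=
  ∀ ⦃v w : G.V⦄, v ∈ H → G.Reach v w → w ∈ H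

/-- A set `X` of vertices is saturated if every vertex `v` with `0 < |s⁻¹(v)| < ∞`
all of whose emitted edges have range in `X` itself belongs to `X`. -/
def Saturated (X : Set G.V) : Prop :=
  ∀ v : G.V, (G.src ⁻¹' {v}).Finite → (G.src ⁻¹' {v}).Nonempty →
    (∀ e : G.E, G.src e = v → G.rng e ∈ X) → v ∈ X

/-- The saturation `Σ(X)`: the smallest saturated set containing `X`. -/
def saturation (X : Set G.V) : Set G.V :=
  ⋂₀ {Y : Set G.V | G.Saturated Y ∧ X ⊆ Y}

/-- `ΣH(X)`: the smallest saturated hereditary set containing `X`. -/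
def satHered (X : Set G.V) : Set G.V :=
  ⋂₀ {Y : Set G.V | G.Saturated Y ∧ G.Hereditary Y ∧ X ⊆ Y}

end Digraph'

namespace Digraph'

/-- A Cuntz-Krieger `E`-family in a C*-algebra `A`: mutually orthogonal projections
`P v`, elements `S e` with mutually orthogonal range projections, satisfying the
Cuntz-Krieger relations (G1)–(G3). -/
structure IsCKFamily (G : Digraph') {A : Type*} [NonUnitalCStarAlgebra A]
    [PartialOrder A] [StarOrderedRing A] (P : G.V → A) (S : G.E → A) : Prop where
  proj_star : ∀ v : G.V, star (P v) = P v
  proj_idem : ∀ v : G.V, P v * P v = P v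
  proj_orth : ∀ v w : G.V, v ≠ w → P v * P w = 0
  range_orth : ∀ e f : G.E, e ≠ f → (S e * star (S e)) * (S f * star (S f)) = 0
  ck1 : ∀ e : G.E, star (S e) * S e = P (G.rng e)
  ck2 : ∀ e : G.E, S e * star (S e) ≤ P (G.src e)
  ck3 : ∀ v : G.V, (G.src ⁻¹' {v}).Finite → (G.src ⁻¹' {v}).Nonempty →
    P v = ∑ᶠ e ∈ G.src ⁻¹' {v}, S e * star (S e)

end Digraph'

/-- `J` is a closed two-sided ideal of the subalgebra (given as the subset `B`)
of the ambient C*-algebra. -/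
def IsClosedIdealOf {A : Type*} [NonUnitalCStarAlgebra A] (B J : Set A) : Prop :=
  J ⊆ B ∧ IsClosed J ∧ (0 : A) ∈ J ∧
  (∀ a b : A, a ∈ J → b ∈ J → a + b ∈ J) ∧
  (∀ (c : ℂ) (a : A), a ∈ J → c • a ∈ J) ∧
  (∀ b a : A, b ∈ B → a ∈ J → b * a ∈ J ∧ a * b ∈ J)

/-- The closed two-sided ideal of the subalgebra `B` generated by a subset `X`. -/
def closedIdealGenIn {A : Type*} [NonUnitalCStarAlgebra A] (B X : Set A) : Set A :=
  ⋂₀ {J : Set A | IsClosedIdealOf B J ∧ X ⊆ J}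

/-- The C*-subalgebra `C*(S, P)` of `A` generated by a Cuntz-Krieger family,
regarded as a subset of `A`: the closure of the non-unital star subalgebra
generated by the `S e` and the `P v`. -/
def cstarSP {A : Type*} [NonUnitalCStarAlgebra A] (G : Digraph')
    (P : G.V → A) (S : G.E → A) : Set A :=
  closure ((NonUnitalStarAlgebra.adjoin ℂ (Set.range S ∪ Set.range P) :
    NonUnitalStarSubalgebra ℂ A) : Set A)

namespace Digraph'

variable (G : Digraph')

/-- `IsPathFrom v l`: the list of edges `l` is a path starting at the vertex `v`
(vertices are regarded as paths of length 0). -/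
def IsPathFrom (v : G.V) : List G.E → Prop
  | [] => True
  | e :: l => G.src e = v ∧ IsPathFrom (G.rng e) l

/-- The range of the path starting at `v` with edge list `l`. -/
def pathEnd (v : G.V) : List G.E → G.V
  | [] => v
  | e :: l => pathEnd (G.rng e) l

/-- `S_α` for a path `α` starting at `v` with edge list `l`: the product
`S_{α₁} ⋯ S_{αₙ}` for paths of positive length, and `S_v := P v` for the path of
length 0. -/
def sPath {A : Type*} [NonUnitalCStarAlgebra A] (P : G.V → A) (S : G.E → A) :
    G.V → List G.E → A
  | v, [] => P v
  | _, [e] => S e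
  | _, e :: l => S e * sPath P S (G.rng e) l

end Digraph'

namespace Digraph'

variable (G : Digraph')

/-- `H^fin_∞`: the vertices outside `H` emitting infinitely many edges, but only
finitely many (and at least one) into `E⁰ \ H`. -/
def HfinInf (H : Set G.V) : Set G.V :=
  {v : G.V | v ∉ H ∧ (G.src ⁻¹' {v}).Infinite ∧
    {e : G.E | G.src e = v ∧ G.rng e ∉ H}.Finite ∧
    {e : G.E | G.src e = v ∧ G.rng e ∉ H}.Nonempty}

/-- The projection `P_{v,H} = Σ_{s(e) = v, r(e) ∉ H} S_e S_e*` (a finite sum when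
`v ∈ H^fin_∞`). -/
noncomputable def pvH {A : Type*} [NonUnitalCStarAlgebra A] (S : G.E → A)
    (H : Set G.V) (v : G.V) : A :=
  ∑ᶠ e ∈ {e : G.E | G.src e = v ∧ G.rng e ∉ H}, S e * star (S e)

end Digraph'

open scoped Classical

section CStar
variable {A : Type*} [NonUnitalCStarAlgebra A] [PartialOrder A] [StarOrderedRing A]

/-- If `p ≤ q` for self-adjoint idempotents, then `q * p = p`. -/
lemma proj_le_absorb {p q : A} (hp : star p = p) (hp2 : p * p = p)
    (hq : star q = q) (hq2 : q * q = q) (hle : p ≤ q) : q * p = p := by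
  have h1 : p ≤ p * q * p := by
    have := star_left_conjugate_le_conjugate hle p
    rwa [hp, hp2, hp2] at this
  have h2 : star (p - q * p) * (p - q * p) = p - p * q * p := by
    simp only [star_sub, star_mul, hp, hq, sub_mul, mul_sub]
    rw [hp2, ← mul_assoc p q p]
    have h5 : p * q * (q * p) = p * q * p := by
      rw [mul_assoc p q (q*p), ← mul_assoc q q p, hq2, ← mul_assoc]
    rw [h5]
    abel
  have h3 : star (p - q * p) * (p - q * p) = 0 :=
    le_antisymm (h2 ▸ sub_nonpos.mpr h1) (star_mul_self_nonneg _)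
  have h4 : p - q * p = 0 := by
    rwa [CStarRing.star_mul_self_eq_zero_iff] at h3
  linear_combination (norm := noncomm_ring) -h4

end CStar

section CK
open Digraph'
variable {G : Digraph'} {A : Type*} [NonUnitalCStarAlgebra A]
  [PartialOrder A] [StarOrderedRing A] {P : G.V → A} {S : G.E → A}
  (hCK : G.IsCKFamily P S)

include hCK

/-- `S e * P (rng e) = S e`. -/
lemma S_mul_rngP (e : G.E) : S e * P (G.rng e) = S e := by
  have key : star (S e) * (S e * P (G.rng e)) = P (G.rng e) := by
    rw [← mul_assoc, hCK.ck1, hCK.proj_idem]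
  have h : star (S e * P (G.rng e) - S e) * (S e * P (G.rng e) - S e) = 0 := by
    simp only [star_sub, star_mul, hCK.proj_star, sub_mul, mul_sub, mul_assoc, key,
      hCK.ck1, hCK.proj_idem]
    abel
  rw [CStarRing.star_mul_self_eq_zero_iff, sub_eq_zero] at h
  exact h

lemma S_mul_star_mul_S (e : G.E) : S e * star (S e) * S e = S e := by
  rw [mul_assoc, hCK.ck1, S_mul_rngP hCK]

lemma rngP_mul_starS (e : G.E) : P (G.rng e) * star (S e) = star (S e) := by
  have := congrArg star (S_mul_rngP hCK e)
  rwa [star_mul, hCK.proj_star] at this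

/-- `S e S e*` is a self-adjoint idempotent. -/
lemma rangeProj_idem (e : G.E) : (S e * star (S e)) * (S e * star (S e)) = S e * star (S e) := by
  rw [← mul_assoc, S_mul_star_mul_S hCK]

omit hCK in
lemma rangeProj_star (e : G.E) : star (S e * star (S e)) = S e * star (S e) := by
  rw [star_mul, star_star]

/-- `P (src e) * S e = S e`. -/
lemma srcP_mul_S (e : G.E) : P (G.src e) * S e = S e := by
  have habs : P (G.src e) * (S e * star (S e)) = S e * star (S e) :=
    proj_le_absorb (rangeProj_star e) (rangeProj_idem hCK e)
      (hCK.proj_star _) (hCK.proj_idem _) (hCK.ck2 e)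
  calc P (G.src e) * S e = P (G.src e) * (S e * star (S e) * S e) := by
        rw [S_mul_star_mul_S hCK]
    _ = P (G.src e) * (S e * star (S e)) * S e := by simp only [mul_assoc]
    _ = S e * star (S e) * S e := by rw [habs]
    _ = S e := S_mul_star_mul_S hCK e

lemma starS_mul_srcP (e : G.E) : star (S e) * P (G.src e) = star (S e) := by
  have := congrArg star (srcP_mul_S hCK e)
  rwa [star_mul, hCK.proj_star] at this

lemma S_mul_P_ne {e : G.E} {v : G.V} (h : v ≠ G.rng e) : S e * P v = 0 := by
  rw [← S_mul_rngP hCK e, mul_assoc, hCK.proj_orth _ _ (Ne.symm h), mul_zero]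

lemma P_mul_S_ne {e : G.E} {v : G.V} (h : v ≠ G.src e) : P v * S e = 0 := by
  rw [← srcP_mul_S hCK e, ← mul_assoc, hCK.proj_orth _ _ h, zero_mul]

lemma starS_mul_P (e : G.E) (v : G.V) :
    star (S e) * P v = if G.src e = v then star (S e) else 0 := by
  split_ifs with h
  · subst h; exact starS_mul_srcP hCK e
  · have := congrArg star (P_mul_S_ne hCK (Ne.symm h))
    rwa [star_mul, hCK.proj_star, star_zero] at this

lemma P_mul_starS (e : G.E) (v : G.V) :
    P v * star (S e) = if v = G.rng e then star (S e) else 0 := by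
  split_ifs with h
  · subst h; exact rngP_mul_starS hCK e
  · have := congrArg star (S_mul_P_ne hCK h)
    rwa [star_mul, hCK.proj_star, star_zero] at this

lemma starS_mul_S (e f : G.E) :
    star (S e) * S f = if e = f then P (G.rng e) else 0 := by
  split_ifs with h
  · subst h; exact hCK.ck1 e
  · calc star (S e) * S f
        = star (S e * star (S e) * S e) * (S f * star (S f) * S f) := by
          rw [S_mul_star_mul_S hCK, S_mul_star_mul_S hCK]
      _ = star (S e) * ((S e * star (S e)) * (S f * star (S f)) * S f) := by
          simp only [star_mul, star_star, mul_assoc]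
      _ = 0 := by rw [hCK.range_orth e f h, zero_mul, mul_zero]

end CK
section Path
open Digraph'
variable {G : Digraph'} {A : Type*} [NonUnitalCStarAlgebra A]
  [PartialOrder A] [StarOrderedRing A] {P : G.V → A} {S : G.E → A}
  (hCK : G.IsCKFamily P S)

lemma spath_nil (v : G.V) : G.sPath P S v [] = P v := rfl

include hCK in
lemma spath_cons (a : G.V) (e : G.E) (l : List G.E) :
    G.sPath P S a (e :: l) = S e * G.sPath P S (G.rng e) l := by
  cases l with
  | nil => exact (S_mul_rngP hCK e).symm
  | cons f l => rfl

lemma pathEnd_cons (a : G.V) (e : G.E) (l : List G.E) :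
    G.pathEnd a (e :: l) = G.pathEnd (G.rng e) l := rfl

include hCK

lemma spath_mul_endP (a : G.V) (l : List G.E) :
    G.sPath P S a l * P (G.pathEnd a l) = G.sPath P S a l := by
  induction l generalizing a with
  | nil => exact hCK.proj_idem a
  | cons e l ih =>
      rw [spath_cons hCK, pathEnd_cons, mul_assoc, ih]

lemma P_mul_spath {a : G.V} {l : List G.E} (hl : G.IsPathFrom a l) :
    P a * G.sPath P S a l = G.sPath P S a l := by
  cases l with
  | nil => exact hCK.proj_idem a
  | cons e l =>
      rw [spath_cons hCK, ← mul_assoc, ← hl.1, srcP_mul_S hCK]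

lemma P_mul_spath_ne {a v : G.V} {l : List G.E} (hl : G.IsPathFrom a l) (h : v ≠ a) :
    P v * G.sPath P S a l = 0 := by
  cases l with
  | nil => exact hCK.proj_orth _ _ h
  | cons e l =>
      rw [spath_cons hCK, ← mul_assoc, P_mul_S_ne hCK (hl.1 ▸ h), zero_mul]

/-- Left multiplication of a path element by `S e`. -/
lemma S_mul_spath {a : G.V} {l : List G.E} (hl : G.IsPathFrom a l) (e : G.E) :
    S e * G.sPath P S a l =
      if G.rng e = a then G.sPath P S (G.src e) (e :: l) else 0 := by
  split_ifs with h
  · subst h; rw [spath_cons hCK]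
  · cases l with
    | nil => exact S_mul_P_ne hCK (fun hv => h hv.symm)
    | cons f l =>
        rw [spath_cons hCK, ← mul_assoc, ← srcP_mul_S hCK f, ← mul_assoc,
          S_mul_P_ne hCK (fun hv => h (hv.symm.trans hl.1)), zero_mul, zero_mul]

omit hCK in
lemma isPathFrom_cons {a : G.V} {l : List G.E} (hl : G.IsPathFrom a l) (e : G.E)
    (h : G.rng e = a) : G.IsPathFrom (G.src e) (e :: l) := ⟨rfl, h ▸ hl⟩

omit hCK in
lemma pathEnd_snoc (b : G.V) (l : List G.E) (e : G.E) :
    G.pathEnd b (l ++ [e]) = G.rng e := by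
  induction l generalizing b with
  | nil => rfl
  | cons f l ih => exact ih (G.rng f)

omit hCK in
lemma isPathFrom_snoc {b : G.V} {l : List G.E} (hl : G.IsPathFrom b l) {e : G.E}
    (h : G.src e = G.pathEnd b l) : G.IsPathFrom b (l ++ [e]) := by
  induction l generalizing b with
  | nil => exact ⟨h, trivial⟩
  | cons f l ih => exact ⟨hl.1, ih hl.2 h⟩

lemma spath_snoc {b : G.V} {l : List G.E} {e : G.E}
    (h : G.src e = G.pathEnd b l) :
    G.sPath P S b (l ++ [e]) = G.sPath P S b l * S e := by
  induction l generalizing b with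
  | nil =>
      show G.sPath P S b [e] = P b * S e
      have : b = G.src e := h.symm
      subst this
      rw [srcP_mul_S hCK]; rfl
  | cons f l ih =>
      rw [List.cons_append, spath_cons hCK, spath_cons hCK, ih h, mul_assoc]

lemma spath_mem_adjoin (a : G.V) (l : List G.E) :
    G.sPath P S a l ∈ NonUnitalStarAlgebra.adjoin ℂ (Set.range S ∪ Set.range P) := by
  induction l generalizing a with
  | nil => exact NonUnitalStarAlgebra.subset_adjoin ℂ _ (Or.inr ⟨a, rfl⟩)
  | cons e l ih =>
      rw [spath_cons hCK]
      exact mul_mem (NonUnitalStarAlgebra.subset_adjoin ℂ _ (Or.inl ⟨e, rfl⟩)) (ih _)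

end Path
section PvH
open Digraph'
variable {G : Digraph'} {A : Type*} [NonUnitalCStarAlgebra A]
  [PartialOrder A] [StarOrderedRing A] {P : G.V → A} {S : G.E → A}
  (hCK : G.IsCKFamily P S) {H : Set G.V} {w : G.V}
  (hfin : {e : G.E | G.src e = w ∧ G.rng e ∉ H}.Finite)

include hfin in
lemma pvH_eq_sum :
    G.pvH S H w = ∑ e ∈ hfin.toFinset, S e * star (S e) :=
  finsum_mem_eq_finite_toFinset_sum _ hfin

include hfin in
lemma star_pvH : star (G.pvH S H w) = G.pvH S H w := by
  rw [pvH_eq_sum hfin, star_sum]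
  exact Finset.sum_congr rfl fun e _ => rangeProj_star e

include hCK hfin in
lemma P_mul_pvH : P w * G.pvH S H w = G.pvH S H w := by
  rw [pvH_eq_sum hfin, Finset.mul_sum]
  refine Finset.sum_congr rfl fun e he => ?_
  have hsrc : G.src e = w := ((Set.Finite.mem_toFinset hfin).mp he).1
  rw [← mul_assoc, ← hsrc, srcP_mul_S hCK]

include hCK hfin in
lemma pvH_mul_P : G.pvH S H w * P w = G.pvH S H w := by
  have := congrArg star (P_mul_pvH hCK hfin)
  rwa [star_mul, star_pvH hfin, hCK.proj_star] at this

include hCK hfin in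
lemma starS_mul_pvH (e : G.E) :
    star (S e) * G.pvH S H w =
      if G.src e = w ∧ G.rng e ∉ H then star (S e) else 0 := by
  rw [pvH_eq_sum hfin, Finset.mul_sum]
  have hterm : ∀ f ∈ hfin.toFinset,
      star (S e) * (S f * star (S f)) = if f = e then star (S e) else 0 := by
    intro f _
    rw [← mul_assoc, starS_mul_S hCK]
    by_cases h : e = f
    · subst h
      simp [rngP_mul_starS hCK e]
    · rw [if_neg h, if_neg (fun h2 => h h2.symm), zero_mul]
  rw [Finset.sum_congr rfl hterm, Finset.sum_ite_eq' hfin.toFinset e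
    (fun _ => star (S e))]
  simp [Set.Finite.mem_toFinset]

include hCK hfin in
lemma pvH_mem_adjoin :
    G.pvH S H w ∈ NonUnitalStarAlgebra.adjoin ℂ (Set.range S ∪ Set.range P) := by
  rw [pvH_eq_sum hfin]
  exact sum_mem fun e _ => mul_mem
    (NonUnitalStarAlgebra.subset_adjoin ℂ _ (Or.inl ⟨e, rfl⟩))
    (star_mem (NonUnitalStarAlgebra.subset_adjoin ℂ _ (Or.inl ⟨e, rfl⟩)))

end PvH
section SpanSet
open Digraph'

variable (G : Digraph') {A : Type*} [NonUnitalCStarAlgebra A]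
  [PartialOrder A] [StarOrderedRing A] (P : G.V → A) (S : G.E → A)
  (H B : Set G.V)

/-- The spanning set of the ideal. -/
def spanSet : Set A :=
  {x : A | ∃ v ∈ H, ∃ (a : G.V) (α : List G.E) (b : G.V) (β : List G.E),
      G.IsPathFrom a α ∧ G.pathEnd a α = v ∧
      G.IsPathFrom b β ∧ G.pathEnd b β = v ∧
      x = G.sPath P S a α * P v * star (G.sPath P S b β)} ∪
  {x : A | ∃ w ∈ B, ∃ (a : G.V) (μ : List G.E) (b : G.V) (ν : List G.E),
      G.IsPathFrom a μ ∧ G.pathEnd a μ = w ∧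
      G.IsPathFrom b ν ∧ G.pathEnd b ν = w ∧
      x = G.sPath P S a μ * (P w - G.pvH S H w) * star (G.sPath P S b ν)}

variable {G P S H B}
variable (hCK : G.IsCKFamily P S) (hHher : G.Hereditary H) (hB : B ⊆ G.HfinInf H)

include hCK

lemma star_mem_spanSet (hB : B ⊆ G.HfinInf H) {x : A} (hx : x ∈ spanSet G P S H B) :
    star x ∈ spanSet G P S H B := by
  rcases hx with ⟨v, hv, a, α, b, β, hα, ha, hβ, hb, rfl⟩ |
    ⟨w, hw, a, α, b, β, hα, ha, hβ, hb, rfl⟩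
  · refine Or.inl ⟨v, hv, b, β, a, α, hβ, hb, hα, ha, ?_⟩
    simp only [star_mul, star_star, hCK.proj_star, mul_assoc]
  · refine Or.inr ⟨w, hw, b, β, a, α, hβ, hb, hα, ha, ?_⟩
    have hst : star (P w - G.pvH S H w) = P w - G.pvH S H w := by
      rw [star_sub, hCK.proj_star, star_pvH (hB hw).2.2.1]
    simp only [star_mul, star_star, hst, mul_assoc]

lemma P_mul_mem_span (v : G.V) {x : A} (hx : x ∈ spanSet G P S H B) :
    P v * x ∈ Submodule.span ℂ (spanSet G P S H B) := by
  rcases hx with ⟨u, hu, a, α, b, β, hα, ha, hβ, hb, rfl⟩ |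
    ⟨w, hw, a, α, b, β, hα, ha, hβ, hb, rfl⟩ <;>
  · rw [← mul_assoc, ← mul_assoc]
    by_cases h : v = a
    · subst h
      rw [P_mul_spath hCK hα]
      first
      | exact Submodule.subset_span (Or.inl ⟨u, hu, v, α, b, β, hα, ha, hβ, hb, rfl⟩)
      | exact Submodule.subset_span (Or.inr ⟨w, hw, v, α, b, β, hα, ha, hβ, hb, rfl⟩)
    · rw [P_mul_spath_ne hCK hα h, zero_mul, zero_mul]
      exact Submodule.zero_mem _

lemma S_mul_mem_span (e : G.E) {x : A} (hx : x ∈ spanSet G P S H B) :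
    S e * x ∈ Submodule.span ℂ (spanSet G P S H B) := by
  rcases hx with ⟨u, hu, a, α, b, β, hα, ha, hβ, hb, rfl⟩ |
    ⟨w, hw, a, α, b, β, hα, ha, hβ, hb, rfl⟩
  · rw [← mul_assoc, ← mul_assoc, S_mul_spath hCK hα e]
    by_cases h : G.rng e = a
    · rw [if_pos h]
      have h1 : G.IsPathFrom (G.src e) (e :: α) := isPathFrom_cons hα e h
      have h2 : G.pathEnd (G.src e) (e :: α) = u := by rw [pathEnd_cons, h]; exact ha
      exact Submodule.subset_span
        (Or.inl ⟨u, hu, G.src e, e :: α, b, β, h1, h2, hβ, hb, rfl⟩)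
    · rw [if_neg h, zero_mul, zero_mul]
      exact Submodule.zero_mem _
  · rw [← mul_assoc, ← mul_assoc, S_mul_spath hCK hα e]
    by_cases h : G.rng e = a
    · rw [if_pos h]
      have h1 : G.IsPathFrom (G.src e) (e :: α) := isPathFrom_cons hα e h
      have h2 : G.pathEnd (G.src e) (e :: α) = w := by rw [pathEnd_cons, h]; exact ha
      exact Submodule.subset_span
        (Or.inr ⟨w, hw, G.src e, e :: α, b, β, h1, h2, hβ, hb, rfl⟩)
    · rw [if_neg h, zero_mul, zero_mul]
      exact Submodule.zero_mem _

/-- `S e* ⬝ star (S_β) = P(rng e) P(rng e) star (S_{β e})` when the path continues. -/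
lemma starS_mul_star_spath {b : G.V} {β : List G.E} {e : G.E}
    (hb : G.src e = G.pathEnd b β) :
    star (S e) * star (G.sPath P S b β)
      = G.sPath P S (G.rng e) [] * P (G.rng e) * star (G.sPath P S b (β ++ [e])) := by
  show _ = P (G.rng e) * P (G.rng e) * star (G.sPath P S b (β ++ [e]))
  rw [hCK.proj_idem, spath_snoc hCK hb, star_mul, ← mul_assoc, rngP_mul_starS hCK]
include hCK in
lemma starS_mul_spath_cons {a : G.V} {f : G.E} {l : List G.E}
    (hα : G.IsPathFrom a (f :: l)) (e : G.E) :
    star (S e) * G.sPath P S a (f :: l) =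
      if e = f then G.sPath P S (G.rng f) l else 0 := by
  rw [spath_cons hCK, ← mul_assoc, starS_mul_S hCK]
  by_cases h : e = f
  · subst h
    rw [if_pos rfl, if_pos rfl, P_mul_spath hCK hα.2]
  · rw [if_neg h, if_neg h, zero_mul]

lemma starS_mul_mem_span (hHher : G.Hereditary H) (hB : B ⊆ G.HfinInf H) (e : G.E)
    {x : A} (hx : x ∈ spanSet G P S H B) :
    star (S e) * x ∈ Submodule.span ℂ (spanSet G P S H B) := by
  rcases hx with ⟨u, hu, a, α, b, β, hα, ha, hβ, hb, rfl⟩ |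
    ⟨w, hw, a, α, b, β, hα, ha, hβ, hb, rfl⟩
  · cases α with
    | nil =>
        have ha' : a = u := ha
        subst ha'
        rw [show G.sPath P S a [] = P a from rfl, hCK.proj_idem, ← mul_assoc,
          starS_mul_P hCK]
        by_cases h : G.src e = a
        · rw [if_pos h]
          have hsrc : G.src e = G.pathEnd b β := h.trans hb.symm
          have hre : G.rng e ∈ H :=
            hHher (show G.src e ∈ H by rwa [h]) (Relation.ReflTransGen.single ⟨e, rfl, rfl⟩)
          rw [starS_mul_star_spath hCK hsrc]
          exact Submodule.subset_span (Or.inl ⟨G.rng e, hre, G.rng e, [], b, β ++ [e],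
            trivial, rfl, isPathFrom_snoc hβ hsrc, pathEnd_snoc b β e, rfl⟩)
        · rw [if_neg h, zero_mul]
          exact Submodule.zero_mem _
    | cons f l =>
        rw [← mul_assoc, ← mul_assoc, starS_mul_spath_cons hCK hα e]
        by_cases h : e = f
        · rw [if_pos h]
          exact Submodule.subset_span (Or.inl ⟨u, hu, G.rng f, l, b, β, hα.2, ha, hβ, hb, rfl⟩)
        · rw [if_neg h, zero_mul, zero_mul]
          exact Submodule.zero_mem _
  · cases α with
    | nil =>
        have ha' : a = w := ha
        subst ha'
        rw [show G.sPath P S a [] = P a from rfl, ← mul_assoc, ← mul_assoc,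
          starS_mul_P hCK]
        by_cases h : G.src e = a
        · rw [if_pos h]
          have hfin := (hB hw).2.2.1
          rw [mul_sub, starS_mul_P hCK, if_pos h, starS_mul_pvH hCK hfin]
          by_cases hre : G.rng e ∈ H
          · rw [if_neg (fun hc => hc.2 hre), sub_zero]
            have hsrc : G.src e = G.pathEnd b β := h.trans hb.symm
            rw [starS_mul_star_spath hCK hsrc]
            exact Submodule.subset_span (Or.inl ⟨G.rng e, hre, G.rng e, [], b, β ++ [e],
              trivial, rfl, isPathFrom_snoc hβ hsrc, pathEnd_snoc b β e, rfl⟩)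
          · rw [if_pos ⟨h, hre⟩, sub_self, zero_mul]
            exact Submodule.zero_mem _
        · rw [if_neg h, zero_mul, zero_mul]
          exact Submodule.zero_mem _
    | cons f l =>
        rw [← mul_assoc, ← mul_assoc, starS_mul_spath_cons hCK hα e]
        by_cases h : e = f
        · rw [if_pos h]
          exact Submodule.subset_span (Or.inr ⟨w, hw, G.rng f, l, b, β, hα.2, ha, hβ, hb, rfl⟩)
        · rw [if_neg h, zero_mul, zero_mul]
          exact Submodule.zero_mem _

end SpanSet
section Final
open Digraph'

variable {G : Digraph'} {A : Type*} [NonUnitalCStarAlgebra A]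
  [PartialOrder A] [StarOrderedRing A] {P : G.V → A} {S : G.E → A}
  {H B : Set G.V}

lemma spanSet_subset_adjoin (hCK : G.IsCKFamily P S) (hB : B ⊆ G.HfinInf H) :
    spanSet G P S H B ⊆
      (NonUnitalStarAlgebra.adjoin ℂ (Set.range S ∪ Set.range P) :
        NonUnitalStarSubalgebra ℂ A) := by
  rintro x (⟨v, hv, a, α, b, β, hα, ha, hβ, hb, rfl⟩ |
    ⟨w, hw, a, α, b, β, hα, ha, hβ, hb, rfl⟩)
  · exact mul_mem (mul_mem (spath_mem_adjoin hCK a α)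
      (NonUnitalStarAlgebra.subset_adjoin ℂ _ (Or.inr ⟨v, rfl⟩)))
      (star_mem (spath_mem_adjoin hCK b β))
  · exact mul_mem (mul_mem (spath_mem_adjoin hCK a α)
      (sub_mem (NonUnitalStarAlgebra.subset_adjoin ℂ _ (Or.inr ⟨w, rfl⟩))
        (pvH_mem_adjoin hCK (hB hw).2.2.1)))
      (star_mem (spath_mem_adjoin hCK b β))

lemma genSet_subset_spanSet (hCK : G.IsCKFamily P S) (hB : B ⊆ G.HfinInf H) :
    ({x : A | ∃ v ∈ H, x = P v} ∪ {x : A | ∃ w ∈ B, x = P w - G.pvH S H w}) ⊆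
      spanSet G P S H B := by
  rintro x (⟨v, hv, rfl⟩ | ⟨w, hw, rfl⟩)
  · refine Or.inl ⟨v, hv, v, [], v, [], trivial, rfl, trivial, rfl, ?_⟩
    rw [spath_nil, hCK.proj_star, hCK.proj_idem, hCK.proj_idem]
  · have hfin := (hB hw).2.2.1
    refine Or.inr ⟨w, hw, w, [], w, [], trivial, rfl, trivial, rfl, ?_⟩
    have h1 : P w * (P w - G.pvH S H w) = P w - G.pvH S H w := by
      rw [mul_sub, hCK.proj_idem, P_mul_pvH hCK hfin]
    have h2 : (P w - G.pvH S H w) * P w = P w - G.pvH S H w := by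
      rw [sub_mul, hCK.proj_idem, pvH_mul_P hCK hfin]
    rw [spath_nil, hCK.proj_star, h1, h2]

end Final
/-- For `H` saturated hereditary and `B ⊆ H^fin_∞`, the closed
two-sided ideal `J_{H,B}` of `C*(S, P)` generated by
`{P_v : v ∈ H} ∪ {P_w − P_{w,H} : w ∈ B}` equals the closed linear span of
`{S_α P_v S_β* : v ∈ H, r(α) = r(β) = v} ∪
 {S_μ (P_w − P_{w,H}) S_ν* : w ∈ B, r(μ) = r(ν) = w}`. -/
theorem stmt_17 (G : Digraph') [Countable G.V] [Countable G.E]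
    {A : Type*} [NonUnitalCStarAlgebra A] [PartialOrder A] [StarOrderedRing A]
    (P : G.V → A) (S : G.E → A) (hCK : G.IsCKFamily P S)
    (H : Set G.V) (hHsat : G.Saturated H) (hHher : G.Hereditary H)
    (B : Set G.V) (hB : B ⊆ G.HfinInf H) :
    closedIdealGenIn (cstarSP G P S)
        ({x : A | ∃ v ∈ H, x = P v} ∪ {x : A | ∃ w ∈ B, x = P w - G.pvH S H w}) =
      closure (Submodule.span ℂ
        ({x : A | ∃ v ∈ H, ∃ (a : G.V) (α : List G.E) (b : G.V) (β : List G.E),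
            G.IsPathFrom a α ∧ G.pathEnd a α = v ∧
            G.IsPathFrom b β ∧ G.pathEnd b β = v ∧
            x = G.sPath P S a α * P v * star (G.sPath P S b β)} ∪
         {x : A | ∃ w ∈ B, ∃ (a : G.V) (μ : List G.E) (b : G.V) (ν : List G.E),
            G.IsPathFrom a μ ∧ G.pathEnd a μ = w ∧
            G.IsPathFrom b ν ∧ G.pathEnd b ν = w ∧
            x = G.sPath P S a μ * (P w - G.pvH S H w) * star (G.sPath P S b ν)})
        : Set A) := by

  show _ = closure (Submodule.span ℂ (spanSet G P S H B) : Set A)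
  set M := (Submodule.span ℂ (spanSet G P S H B)).topologicalClosure with hMdef
  have hMset : (M : Set A) = closure (Submodule.span ℂ (spanSet G P S H B) : Set A) :=
    Submodule.topologicalClosure_coe _
  have hMclosed : IsClosed (M : Set A) := Submodule.isClosed_topologicalClosure _
  have hspan_le_M : ∀ y ∈ spanSet G P S H B, y ∈ M := fun y hy =>
    Submodule.le_topologicalClosure _ (Submodule.subset_span hy)
  have hsp_le_M : ∀ y ∈ Submodule.span ℂ (spanSet G P S H B), y ∈ M := fun y hy =>
    Submodule.le_topologicalClosure _ hy
  have key : ∀ g : A,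
      (∀ y ∈ spanSet G P S H B, g * y ∈ Submodule.span ℂ (spanSet G P S H B)) →
      ∀ x ∈ M, g * x ∈ M := by
    intro g hg x hx
    have hsub : Submodule.span ℂ (spanSet G P S H B) ≤ M.comap (LinearMap.mulLeft ℂ g) :=
      Submodule.span_le.mpr fun y hy => Submodule.mem_comap.mpr (hsp_le_M _ (hg y hy))
    have hclosed : IsClosed ((M.comap (LinearMap.mulLeft ℂ g)) : Set A) := by
      have h0 : ((M.comap (LinearMap.mulLeft ℂ g)) : Set A)
          = (fun y => g * y) ⁻¹' (M : Set A) := rfl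
      rw [h0]
      exact hMclosed.preimage (continuous_mul_left g)
    have h1 : (M : Set A) ⊆ ((M.comap (LinearMap.mulLeft ℂ g)) : Set A) := by
      rw [hMset]
      exact closure_minimal hsub hclosed
    exact h1 hx
  have hstarM : ∀ x ∈ M, star x ∈ M := by
    intro x hx
    have hP : (Submodule.span ℂ (spanSet G P S H B) : Set A) ⊆ {y : A | star y ∈ M} := by
      intro y hy
      induction hy using Submodule.span_induction with
      | mem z hz => exact hspan_le_M _ (star_mem_spanSet hCK hB hz)
      | zero => show star (0 : A) ∈ M; rw [star_zero]; exact M.zero_mem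
      | add a b ha hb iha ihb => show star (a + b) ∈ M; rw [star_add]; exact M.add_mem iha ihb
      | smul c a ha iha => show star (c • a) ∈ M; rw [star_smul]; exact M.smul_mem _ iha
    have hclosed : IsClosed {y : A | star y ∈ M} := by
      have h0 : {y : A | star y ∈ M} = star ⁻¹' (M : Set A) := rfl
      rw [h0]
      exact hMclosed.preimage continuous_star
    exact closure_minimal hP hclosed hx
  have hPmul : ∀ (v : G.V), ∀ x ∈ M, P v * x ∈ M := fun v =>
    key (P v) fun y hy => P_mul_mem_span hCK v hy
  have hSmul : ∀ (e : G.E), ∀ x ∈ M, S e * x ∈ M := fun e =>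
    key (S e) fun y hy => S_mul_mem_span hCK e hy
  have hstarSmul : ∀ (e : G.E), ∀ x ∈ M, star (S e) * x ∈ M := fun e =>
    key (star (S e)) fun y hy => starS_mul_mem_span hCK hHher hB e hy
  have habs : ∀ b ∈ NonUnitalStarAlgebra.adjoin ℂ (Set.range S ∪ Set.range P),
      ∀ x ∈ M, b * x ∈ M ∧ x * b ∈ M := by
    intro b hb
    induction hb using NonUnitalStarAlgebra.adjoin_induction with
    | mem g hg =>
        intro x hx
        rcases hg with ⟨e, rfl⟩ | ⟨v, rfl⟩
        · refine ⟨hSmul e x hx, ?_⟩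
          have h1 : star (S e) * star x ∈ M := hstarSmul e _ (hstarM x hx)
          have h2 := hstarM _ h1
          rwa [star_mul, star_star, star_star] at h2
        · refine ⟨hPmul v x hx, ?_⟩
          have h1 : P v * star x ∈ M := hPmul v _ (hstarM x hx)
          have h2 := hstarM _ h1
          rwa [star_mul, star_star, hCK.proj_star] at h2
    | add b c hb hc ihb ihc =>
        intro x hx
        exact ⟨by rw [add_mul]; exact M.add_mem (ihb x hx).1 (ihc x hx).1,
          by rw [mul_add]; exact M.add_mem (ihb x hx).2 (ihc x hx).2⟩
    | zero =>
        intro x hx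
        exact ⟨by rw [zero_mul]; exact M.zero_mem, by rw [mul_zero]; exact M.zero_mem⟩
    | mul b c hb hc ihb ihc =>
        intro x hx
        exact ⟨by rw [mul_assoc]; exact (ihb _ (ihc x hx).1).1,
          by rw [← mul_assoc]; exact (ihc _ (ihb x hx).2).2⟩
    | smul c b hb ih =>
        intro x hx
        exact ⟨by rw [smul_mul_assoc]; exact M.smul_mem _ (ih x hx).1,
          by rw [mul_smul_comm]; exact M.smul_mem _ (ih x hx).2⟩
    | star b hb ih =>
        intro x hx
        constructor
        · have h2 := hstarM _ (ih _ (hstarM x hx)).2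
          rwa [star_mul, star_star] at h2
        · have h2 := hstarM _ (ih _ (hstarM x hx)).1
          rwa [star_mul, star_star] at h2
  apply Set.Subset.antisymm
  · apply Set.sInter_subset_of_mem
    refine ⟨⟨?_, isClosed_closure, ?_, ?_, ?_, ?_⟩, ?_⟩
    · -- closure span ⊆ cstarSP
      have hsub2 : (Submodule.span ℂ (spanSet G P S H B) : Set A) ⊆
          ((NonUnitalStarAlgebra.adjoin ℂ (Set.range S ∪ Set.range P) :
            NonUnitalStarSubalgebra ℂ A) : Set A) := by
        intro y hy
        induction hy using Submodule.span_induction with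
        | mem z hz => exact spanSet_subset_adjoin hCK hB hz
        | zero => exact zero_mem _
        | add a b ha hb iha ihb => exact add_mem iha ihb
        | smul c a ha iha => exact SMulMemClass.smul_mem _ iha
      exact closure_mono hsub2
    · exact subset_closure (Submodule.zero_mem _)
    · intro a b ha hb
      exact M.add_mem ha hb
    · intro c a ha
      exact M.smul_mem c ha
    · intro b a hbB haJ
      have hC : IsClosed {c : A | c * a ∈ M ∧ a * c ∈ M} := by
        have h0 : {c : A | c * a ∈ M ∧ a * c ∈ M}
            = (fun c => c * a) ⁻¹' (M : Set A) ∩ (fun c => a * c) ⁻¹' (M : Set A) := rfl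
        rw [h0]
        exact (hMclosed.preimage (continuous_mul_right a)).inter
          (hMclosed.preimage (continuous_mul_left a))
      have hsub : ((NonUnitalStarAlgebra.adjoin ℂ (Set.range S ∪ Set.range P) :
          NonUnitalStarSubalgebra ℂ A) : Set A) ⊆ {c : A | c * a ∈ M ∧ a * c ∈ M} :=
        fun c hc => habs c hc a haJ
      exact closure_minimal hsub hC hbB
    · intro x hx
      exact subset_closure (Submodule.subset_span (genSet_subset_spanSet hCK hB hx))
  · apply Set.subset_sInter
    rintro J ⟨⟨hJB, hJclosed, hJ0, hJadd, hJsmul, hJmul⟩, hXJ⟩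
    refine closure_minimal ?_ hJclosed
    intro y hy
    induction hy using Submodule.span_induction with
    | mem z hz =>
        rcases hz with ⟨v, hv, a, α, b, β, hα, ha, hβ, hb, rfl⟩ |
          ⟨w, hw, a, α, b, β, hα, ha, hβ, hb, rfl⟩
        · have hPv : P v ∈ J := hXJ (Or.inl ⟨v, hv, rfl⟩)
          have hsp1 : G.sPath P S a α ∈ cstarSP G P S :=
            subset_closure (spath_mem_adjoin hCK a α)
          have hsp2 : star (G.sPath P S b β) ∈ cstarSP G P S :=
            subset_closure (star_mem (spath_mem_adjoin hCK b β))
          exact (hJmul _ _ hsp2 (hJmul _ _ hsp1 hPv).1).2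
        · have hPw : P w - G.pvH S H w ∈ J := hXJ (Or.inr ⟨w, hw, rfl⟩)
          have hsp1 : G.sPath P S a α ∈ cstarSP G P S :=
            subset_closure (spath_mem_adjoin hCK a α)
          have hsp2 : star (G.sPath P S b β) ∈ cstarSP G P S :=
            subset_closure (star_mem (spath_mem_adjoin hCK b β))
          exact (hJmul _ _ hsp2 (hJmul _ _ hsp1 hPw).1).2
    | zero => exact hJ0
    | add a b ha hb iha ihb => exact hJadd _ _ iha ihb
    | smul c a ha iha => exact hJsmul c a iha
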